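/- arXiv:1702.06299 — 2 statements merged into one kernel-verified Lean document; each statement's English description precedes it below -/
import Mathlib

section
/- Let D be a bounded Lipschitz domain in ℝⁿ, and define the geodesic distance d_g^D(x,y) = inf{ℓ(ψ) : ψ : [0,1] → D Lipschitz, ψ(0) = x, ψ(1) = y}, where ℓ(ψ) = ∫₀¹ |ψ̇(t)| dt. Then d_g^D is essentially bounded on D × D: there exists C > 0 depending only on D such that d_g^D(x,y) ≤ C for all x, y ∈ D. -/
open Set intervalIntegral

/-- Length of a path: `ℓ(ψ) = ∫₀¹ |ψ̇(t)| dt`. -/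
noncomputable def pathLen {n : ℕ} (ψ : ℝ → EuclideanSpace ℝ (Fin n)) : ℝ :=
  ∫ t in (0 : ℝ)..1, ‖deriv ψ t‖

/-- The geodesic distance in `D`: infimum of lengths of Lipschitz paths inside `D`
joining `x` to `y`. -/
noncomputable def geodDist {n : ℕ} (D : Set (EuclideanSpace ℝ (Fin n)))
    (x y : EuclideanSpace ℝ (Fin n)) : ℝ :=
  sInf {L : ℝ | ∃ ψ : ℝ → EuclideanSpace ℝ (Fin n), (∃ K : NNReal, LipschitzWith K ψ) ∧
    ψ 0 = x ∧ ψ 1 = y ∧ (∀ t ∈ Icc (0 : ℝ) 1, ψ t ∈ D) ∧ L = pathLen ψ}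

/-- A bounded Lipschitz domain: a bounded open connected set whose boundary is
locally bi-Lipschitz equivalent to a (convex) half-cube. -/
def IsLipschitzDomain {n : ℕ} (D : Set (EuclideanSpace ℝ (Fin n))) : Prop :=
  IsOpen D ∧ IsConnected D ∧ Bornology.IsBounded D ∧
  ∀ x ∈ frontier D, ∃ U Q : Set (EuclideanSpace ℝ (Fin n)),
    ∃ φ φinv : EuclideanSpace ℝ (Fin n) → EuclideanSpace ℝ (Fin n), ∃ kp km : NNReal,
      IsOpen U ∧ x ∈ U ∧ Convex ℝ Q ∧ LipschitzOnWith kp φ Q ∧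
      LipschitzOnWith km φinv (D ∩ U) ∧ Set.BijOn φ Q (D ∩ U) ∧
      ∀ y ∈ D ∩ U, φ (φinv y) = y ∧ φinv y ∈ Q

/-!
It suffices to join any two points of `D` inside `D` by paths of uniformly bounded Lipschitz
constant, since a `K`-Lipschitz path has length at most `K`. Near an interior point, segments in a
small ball do this; near a boundary point, images under the chart `φ` of segments of the convex set
`Q` do it, with constant `kp * km * 2`. As `D` is open and connected, chaining segments joins any
two of its points by some Lipschitz path, and compactness of `closure D` turns the local constants
into a single global one.
-/

open Metric Filter Topology
open scoped NNReal

theorem lipschitzWith_ite_le {E : Type*} [PseudoMetricSpace E] {f g : ℝ → E} {K : ℝ≥0}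
    {c : ℝ} (hf : LipschitzOnWith K f (Iic c)) (hg : LipschitzOnWith K g (Ici c))
    (hfg : f c = g c) :
    LipschitzWith K (fun t => if t ≤ c then f t else g t) := by
  have key : ∀ s u, s ≤ u → dist (if s ≤ c then f s else g s) (if u ≤ c then f u else g u)
      ≤ K * dist s u := by
    intro s u hsu
    by_cases huc : u ≤ c
    · rw [if_pos (hsu.trans huc), if_pos huc]
      exact hf.dist_le_mul s (hsu.trans huc) u huc
    rw [if_neg huc]
    push Not at huc
    by_cases hsc : s ≤ c
    · rw [if_pos hsc]
      calc dist (f s) (g u) ≤ dist (f s) (f c) + dist (g c) (g u) :=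
            hfg ▸ dist_triangle _ _ _
        _ ≤ K * dist s c + K * dist c u :=
            add_le_add (hf.dist_le_mul s hsc c self_mem_Iic)
              (hg.dist_le_mul c self_mem_Ici u huc.le)
        _ = K * dist s u := by
            simp only [Real.dist_eq, abs_of_nonpos (sub_nonpos.2 hsc),
              abs_of_nonpos (sub_nonpos.2 huc.le), abs_of_nonpos (sub_nonpos.2 hsu)]
            ring
    · rw [if_neg hsc]
      push Not at hsc
      exact hg.dist_le_mul s hsc.le u (hsc.le.trans hsu)
  refine LipschitzWith.of_dist_le_mul fun s u => ?_
  rcases le_total s u with h | h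
  · exact key s u h
  · rw [dist_comm, dist_comm s]
    exact key u s h

section LipschitzJoinedIn

variable {E F : Type*}

/-- Requiring `ψ t ∈ D` for every real `t`, not only on `[0, 1]`, keeps these paths closed under
composition with maps that are Lipschitz on `D` only. -/
def LipschitzJoinedIn [PseudoMetricSpace E] (D : Set E) (K : ℝ≥0) (x y : E) : Prop :=
  ∃ ψ : ℝ → E, LipschitzWith K ψ ∧ ψ 0 = x ∧ ψ 1 = y ∧ ∀ t, ψ t ∈ D

namespace LipschitzJoinedIn

variable [PseudoMetricSpace E] {D D' : Set E} {K K' : ℝ≥0} {x y z : E}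

theorem mono (h : LipschitzJoinedIn D K x y) (hK : K ≤ K') : LipschitzJoinedIn D K' x y := by
  obtain ⟨ψ, hψ, h0, h1, hD⟩ := h
  exact ⟨ψ, hψ.weaken hK, h0, h1, hD⟩

theorem mono_set (h : LipschitzJoinedIn D K x y) (hD : D ⊆ D') : LipschitzJoinedIn D' K x y := by
  obtain ⟨ψ, hψ, h0, h1, hmem⟩ := h
  exact ⟨ψ, hψ, h0, h1, fun t => hD (hmem t)⟩

theorem symm (h : LipschitzJoinedIn D K x y) : LipschitzJoinedIn D K y x := by
  obtain ⟨ψ, hψ, h0, h1, hD⟩ := h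
  have hrev : LipschitzWith 1 (fun t : ℝ => 1 - t) := by
    simpa using (LipschitzWith.const (1 : ℝ)).sub LipschitzWith.id
  refine ⟨fun t => ψ (1 - t), ?_, by simpa using h1, by simpa using h0, fun t => hD _⟩
  simpa only [mul_one, Function.comp_def] using hψ.comp hrev

theorem trans (h₁ : LipschitzJoinedIn D K x y) (h₂ : LipschitzJoinedIn D K y z) :
    LipschitzJoinedIn D (2 * K) x z := by
  obtain ⟨f, hf, hf0, hf1, hfD⟩ := h₁
  obtain ⟨g, hg, hg0, hg1, hgD⟩ := h₂
  have hdouble : LipschitzWith 2 (fun t : ℝ => 2 * t) :=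
    LipschitzWith.of_dist_le_mul fun s u => by simp [Real.dist_eq, ← mul_sub, abs_mul]
  have hdouble' : LipschitzWith 2 (fun t : ℝ => 2 * t - 1) := by
    simpa using hdouble.sub (LipschitzWith.const (1 : ℝ))
  refine ⟨fun t => if t ≤ 1 / 2 then f (2 * t) else g (2 * t - 1), ?_, ?_, ?_, ?_⟩
  · rw [mul_comm]
    refine lipschitzWith_ite_le (hf.comp hdouble).lipschitzOnWith
      (hg.comp hdouble').lipschitzOnWith ?_
    norm_num [hf1, hg0]
  · norm_num [hf0]
  · norm_num [hg1]
  · intro t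
    dsimp only
    split_ifs
    exacts [hfD _, hgD _]

end LipschitzJoinedIn

theorem LipschitzJoinedIn.image [PseudoMetricSpace E] [PseudoMetricSpace F] {Q : Set E}
    {D : Set F} {φ : E → F} {k K : ℝ≥0} {x y : E} (h : LipschitzJoinedIn Q K x y)
    (hφ : LipschitzOnWith k φ Q) (hmaps : MapsTo φ Q D) :
    LipschitzJoinedIn D (k * K) (φ x) (φ y) := by
  obtain ⟨ψ, hψ, h0, h1, hQ⟩ := h
  refine ⟨φ ∘ ψ, ?_, by simp [h0], by simp [h1], fun t => hmaps (hQ t)⟩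
  rw [← lipschitzOnWith_univ]
  exact hφ.comp hψ.lipschitzOnWith fun t _ => hQ t

theorem Convex.lipschitzJoinedIn [NormedAddCommGroup E] [NormedSpace ℝ E] {V : Set E} {x y : E}
    (hV : Convex ℝ V) (hx : x ∈ V) (hy : y ∈ V) : LipschitzJoinedIn V (nndist x y) x y := by
  refine ⟨fun t => AffineMap.lineMap x y (projIcc 0 1 zero_le_one t : ℝ), ?_, ?_, ?_,
    fun t => hV.lineMap_mem hx hy (projIcc 0 1 zero_le_one t).2⟩
  · simpa only [mul_one, Function.comp_def] using (lipschitzWith_lineMap x y).comp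
      ((LipschitzWith.subtype_val _).comp (LipschitzWith.projIcc zero_le_one))
  · simp
  · simp

end LipschitzJoinedIn

section Geodesic

variable {n : ℕ}

theorem pathLen_le_of_lipschitzWith {K : ℝ≥0} {ψ : ℝ → EuclideanSpace ℝ (Fin n)}
    (hψ : LipschitzWith K ψ) : pathLen ψ ≤ K := by
  have hbound : ∀ t ∈ uIoc (0 : ℝ) 1, ‖‖deriv ψ t‖‖ ≤ K := fun t _ => by
    simpa using norm_deriv_le_of_lipschitz hψ
  calc pathLen ψ ≤ ‖pathLen ψ‖ := le_abs_self _
    _ ≤ K * |1 - (0 : ℝ)| := norm_integral_le_of_norm_le_const hbound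
    _ = K := by norm_num

theorem geodDist_le_of_lipschitzJoinedIn {D : Set (EuclideanSpace ℝ (Fin n))} {K : ℝ≥0}
    {x y : EuclideanSpace ℝ (Fin n)} (h : LipschitzJoinedIn D K x y) : geodDist D x y ≤ K := by
  obtain ⟨ψ, hψ, h0, h1, hD⟩ := h
  unfold geodDist
  refine le_trans (csInf_le ⟨0, ?_⟩ ⟨ψ, ⟨K, hψ⟩, h0, h1, fun t _ => hD t, rfl⟩)
    (pathLen_le_of_lipschitzWith hψ)
  rintro _ ⟨ψ', -, -, -, -, rfl⟩
  exact integral_nonneg zero_le_one fun t _ => norm_nonneg _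

end Geodesic

section Joinability

variable {E F : Type*}

theorem IsOpen.exists_lipschitzJoinedIn [NormedAddCommGroup E] [NormedSpace ℝ E] {D : Set E}
    (hD : IsOpen D) (hconn : IsPreconnected D) {x y : E} (hx : x ∈ D) (hy : y ∈ D) :
    ∃ K, LipschitzJoinedIn D K x y := by
  refine hconn.induction₂ (fun x y => ∃ K, LipschitzJoinedIn D K x y) (fun p hp => ?_)
    (fun x y z _ _ _ ⟨K₁, h₁⟩ ⟨K₂, h₂⟩ =>
      ⟨2 * max K₁ K₂, (h₁.mono (le_max_left _ _)).trans (h₂.mono (le_max_right _ _))⟩)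
    (fun x y _ _ ⟨K, h⟩ => ⟨K, h.symm⟩) hx hy
  obtain ⟨ε, hε, hball⟩ := Metric.mem_nhds_iff.1 (hD.mem_nhds hp)
  filter_upwards [nhdsWithin_le_nhds (ball_mem_nhds p hε)] with y hy
  exact ⟨_, ((convex_ball p ε).lipschitzJoinedIn (mem_ball_self hε) hy).mono_set hball⟩

theorem exists_forall_lipschitzJoinedIn_of_isCompact_closure [PseudoMetricSpace E]
    {D : Set E} (hc : IsCompact (closure D))
    (hjoin : ∀ x ∈ D, ∀ y ∈ D, ∃ K, LipschitzJoinedIn D K x y)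
    (hloc : ∀ p ∈ closure D, ∃ V ∈ 𝓝 p, ∃ K,
      ∀ x ∈ D ∩ V, ∀ y ∈ D ∩ V, LipschitzJoinedIn D K x y) :
    ∃ K, ∀ x ∈ D, ∀ y ∈ D, LipschitzJoinedIn D K x y := by
  rcases D.eq_empty_or_nonempty with rfl | ⟨x₀, hx₀⟩
  · exact ⟨0, by simp⟩
  obtain ⟨K, hK⟩ : ∃ K, ∀ x ∈ D ∩ closure D, LipschitzJoinedIn D K x₀ x := by
    refine hc.induction_on (p := fun s => ∃ K, ∀ x ∈ D ∩ s, LipschitzJoinedIn D K x₀ x)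
      ⟨0, by simp⟩ (fun s t hst ⟨K, hK⟩ => ⟨K, fun x hx => hK x ⟨hx.1, hst hx.2⟩⟩)
      (fun s t ⟨K₁, h₁⟩ ⟨K₂, h₂⟩ => ⟨max K₁ K₂, ?_⟩) (fun p hp => ?_)
    · rintro x ⟨hxD, hxs | hxt⟩
      exacts [(h₁ x ⟨hxD, hxs⟩).mono (le_max_left _ _),
        (h₂ x ⟨hxD, hxt⟩).mono (le_max_right _ _)]
    obtain ⟨V, hV, Kp, hKp⟩ := hloc p hp
    obtain ⟨y, hyV, hyD⟩ := mem_closure_iff_nhds.1 hp V hV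
    obtain ⟨K', hK'⟩ := hjoin x₀ hx₀ y hyD
    exact ⟨V, mem_nhdsWithin_of_mem_nhds hV, 2 * max K' Kp, fun x hx =>
      (hK'.mono (le_max_left _ _)).trans ((hKp y ⟨hyD, hyV⟩ x hx).mono (le_max_right _ _))⟩
  exact ⟨2 * K, fun x hx y hy =>
    (hK x ⟨hx, subset_closure hx⟩).symm.trans (hK y ⟨hy, subset_closure hy⟩)⟩

theorem nndist_le_two_of_mem_ball [SeminormedAddCommGroup E] {p x y : E}
    (hx : x ∈ ball p 1) (hy : y ∈ ball p 1) : nndist x y ≤ 2 := by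
  rw [← NNReal.coe_le_coe, coe_nndist, NNReal.coe_ofNat]
  linarith [dist_triangle_right x y p, mem_ball.1 hx, mem_ball.1 hy]

theorem exists_nhds_lipschitzJoinedIn_of_mem_nhds [NormedAddCommGroup E] [NormedSpace ℝ E]
    {D : Set E} {p : E} (hD : D ∈ 𝓝 p) :
    ∃ V ∈ 𝓝 p, ∃ K, ∀ x ∈ D ∩ V, ∀ y ∈ D ∩ V, LipschitzJoinedIn D K x y := by
  obtain ⟨ε, hε, hball⟩ := Metric.mem_nhds_iff.1 hD
  refine ⟨ball p ε ∩ ball p 1, inter_mem (ball_mem_nhds p hε) (ball_mem_nhds p one_pos), 2,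
    fun x hx y hy => ?_⟩
  exact (((convex_ball p ε).inter (convex_ball p 1)).lipschitzJoinedIn hx.2 hy.2).mono_set
    (inter_subset_left.trans hball) |>.mono (nndist_le_two_of_mem_ball hx.2.2 hy.2.2)

theorem exists_nhds_lipschitzJoinedIn_of_chart [NormedAddCommGroup E] [NormedAddCommGroup F]
    [NormedSpace ℝ F] {D U : Set E} {Q : Set F} {φ : F → E} {φinv : E → F} {kp km : ℝ≥0}
    {p : E} (hU : U ∈ 𝓝 p) (hQ : Convex ℝ Q) (hφ : LipschitzOnWith kp φ Q)
    (hφinv : LipschitzOnWith km φinv (D ∩ U)) (hmaps : MapsTo φ Q D)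
    (hret : ∀ y ∈ D ∩ U, φ (φinv y) = y ∧ φinv y ∈ Q) :
    ∃ V ∈ 𝓝 p, ∃ K, ∀ x ∈ D ∩ V, ∀ y ∈ D ∩ V, LipschitzJoinedIn D K x y := by
  refine ⟨U ∩ ball p 1, inter_mem hU (ball_mem_nhds p one_pos), kp * (km * 2),
    fun x hx y hy => ?_⟩
  have hxU : x ∈ D ∩ U := ⟨hx.1, hx.2.1⟩
  have hyU : y ∈ D ∩ U := ⟨hy.1, hy.2.1⟩
  obtain ⟨hφx, hxQ⟩ := hret x hxU
  obtain ⟨hφy, hyQ⟩ := hret y hyU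
  have hdist : nndist (φinv x) (φinv y) ≤ km * 2 := by
    rw [← NNReal.coe_le_coe, coe_nndist, NNReal.coe_mul, NNReal.coe_ofNat]
    refine (hφinv.dist_le_mul x hxU y hyU).trans ?_
    gcongr
    exact_mod_cast nndist_le_two_of_mem_ball hx.2.2 hy.2.2
  have hjoin := (hQ.lipschitzJoinedIn hxQ hyQ).image hφ hmaps
  rw [hφx, hφy] at hjoin
  exact hjoin.mono (by gcongr)

theorem IsLipschitzDomain.exists_nhds_lipschitzJoinedIn {n : ℕ}
    {D : Set (EuclideanSpace ℝ (Fin n))} (hD : IsLipschitzDomain D)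
    {p : EuclideanSpace ℝ (Fin n)} (hp : p ∈ closure D) :
    ∃ V ∈ 𝓝 p, ∃ K, ∀ x ∈ D ∩ V, ∀ y ∈ D ∩ V, LipschitzJoinedIn D K x y := by
  obtain ⟨hopen, -, -, hchart⟩ := hD
  by_cases hpD : p ∈ D
  · exact exists_nhds_lipschitzJoinedIn_of_mem_nhds (hopen.mem_nhds hpD)
  obtain ⟨U, Q, φ, φinv, kp, km, hU, hpU, hQ, hφ, hφinv, hbij, hret⟩ :=
    hchart p (hopen.frontier_eq ▸ ⟨hp, hpD⟩)
  exact exists_nhds_lipschitzJoinedIn_of_chart (hU.mem_nhds hpU) hQ hφ hφinv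
    (hbij.mapsTo.mono_right inter_subset_left) hret

end Joinability

theorem geodDist_bounded {n : ℕ} (D : Set (EuclideanSpace ℝ (Fin n)))
    (hD : IsLipschitzDomain D) :
    ∃ C : ℝ, 0 < C ∧ ∀ x ∈ D, ∀ y ∈ D, geodDist D x y ≤ C := by
  have hloc := fun p (hp : p ∈ closure D) => hD.exists_nhds_lipschitzJoinedIn hp
  obtain ⟨hopen, hconn, hbdd, -⟩ := hD
  obtain ⟨K, hK⟩ := exists_forall_lipschitzJoinedIn_of_isCompact_closure
    hbdd.isCompact_closure
    (fun x hx y hy => hopen.exists_lipschitzJoinedIn hconn.isPreconnected hx hy) hloc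
  exact ⟨K + 1, by positivity, fun x hx y hy =>
    (geodDist_le_of_lipschitzJoinedIn (hK x hx y hy)).trans (by linarith)⟩
end

section
/- Let μ > 0, c > 0, σ₀ > 0, and let ℓ(σ) = σ^μ e^{-e^{e^{c/√σ}}} for σ ∈ (0, σ₀). Suppose M, N ≥ 0 satisfy C·M ≤ σ^μ + e^{e^{e^{c/√σ}}} N for all σ ∈ (0,σ₀), and M ≤ 1. Then there exist constants C' > 0, c' > 0 and 0 < ρ₀ ≤ e^{-e^e}, depending only on C, c, μ, σ₀, such that: if N < ρ₀ then C'·M ≤ (ln ln |ln N|)^{-μ/2}, and if N ≥ ρ₀ then M ≤ N/ρ₀. -/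
open Real Set

set_option maxHeartbeats 1000000 in
theorem triple_log_optimization (μ c σ₀ C : ℝ) (hμ : 0 < μ) (hc : 0 < c)
    (hσ₀ : 0 < σ₀) (hC : 0 < C) :
    ∃ C' : ℝ, 0 < C' ∧ ∃ c' : ℝ, 0 < c' ∧ ∃ ρ₀ : ℝ,
      0 < ρ₀ ∧ ρ₀ ≤ Real.exp (-Real.exp (Real.exp 1)) ∧
      ∀ M N : ℝ, 0 ≤ M → 0 ≤ N → M ≤ 1 →
        (∀ σ ∈ Ioo 0 σ₀,
          C * M ≤ σ ^ μ + Real.exp (Real.exp (Real.exp (c / Real.sqrt σ))) * N) →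
        (N < ρ₀ → C' * M ≤ (Real.log (Real.log |Real.log N|)) ^ (-(μ / 2))) ∧
        (ρ₀ ≤ N → M ≤ N / ρ₀) := by
  set L₀ : ℝ := max 2 (max (2 * μ / c) (1 + c / Real.sqrt σ₀)) with hL₀
  have hL₀2 : (2:ℝ) ≤ L₀ := le_max_left _ _
  have hL₀μ : 2 * μ / c ≤ L₀ := le_trans (le_max_left _ _) (le_max_right _ _)
  have hL₀σ : 1 + c / Real.sqrt σ₀ ≤ L₀ := le_trans (le_max_right _ _) (le_max_right _ _)
  have hK : (0:ℝ) < (2 * c) ^ (2 * μ) := Real.rpow_pos_of_pos (by linarith) _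
  refine ⟨C / (2 * (2 * c) ^ (2 * μ)), by positivity, 1, one_pos,
    Real.exp (-Real.exp (Real.exp L₀)), Real.exp_pos _, ?_, ?_⟩
  · apply Real.exp_le_exp.2
    have h1 : Real.exp (Real.exp 1) ≤ Real.exp (Real.exp L₀) :=
      Real.exp_le_exp.2 (Real.exp_le_exp.2 (by linarith [Real.exp_one_lt_d9]))
    linarith
  · intro M N hM hN hM1 hyp
    constructor
    · intro hNρ
      rcases hN.eq_or_lt with h0 | h0
      · -- N = 0 : then M = 0
        have hCM : C * M ≤ 0 := by
          by_contra h
          push_neg at h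
          set σ := min (σ₀ / 2) ((C * M / 2) ^ μ⁻¹) with hσ
          have hσpos : 0 < σ := lt_min (by linarith) (Real.rpow_pos_of_pos (by linarith) _)
          have hmem : σ ∈ Ioo 0 σ₀ := ⟨hσpos, lt_of_le_of_lt (min_le_left _ _) (by linarith)⟩
          have h2 := hyp σ hmem
          rw [← h0, mul_zero, add_zero] at h2
          have hσμ : σ ^ μ ≤ C * M / 2 := by
            calc σ ^ μ ≤ ((C * M / 2) ^ μ⁻¹) ^ μ :=
              Real.rpow_le_rpow hσpos.le (min_le_right _ _) hμ.le
            _ = C * M / 2 := Real.rpow_inv_rpow (by linarith) hμ.ne'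
          linarith
        have hM0 : M = 0 := by
          by_contra hne
          have hMpos : 0 < M := lt_of_le_of_ne hM (Ne.symm hne)
          have := mul_pos hC hMpos
          linarith
        rw [← h0, hM0]
        simp [Real.log_zero, Real.zero_rpow (show -(μ/2) ≠ 0 by intro hh; nlinarith)]
      · -- 0 < N
        have hlogN : Real.log N < -Real.exp (Real.exp L₀) := by
          calc Real.log N < Real.log (Real.exp (-Real.exp (Real.exp L₀))) :=
            Real.log_lt_log h0 hNρ
          _ = -Real.exp (Real.exp L₀) := Real.log_exp _
        set X := -Real.log N with hXdef
        have hXgt : Real.exp (Real.exp L₀) < X := by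
          rw [hXdef]; linarith
        have hXpos : 0 < X := lt_trans (Real.exp_pos _) hXgt
        have habs : |Real.log N| = X := by
          rw [abs_of_neg (by linarith [Real.exp_pos (Real.exp L₀)])]
        have hlogX : Real.exp L₀ < Real.log X := by
          calc Real.exp L₀ = Real.log (Real.exp (Real.exp L₀)) := (Real.log_exp _).symm
          _ < Real.log X := Real.log_lt_log (Real.exp_pos _) hXgt
        have hlogXpos : 0 < Real.log X := lt_trans (Real.exp_pos _) hlogX
        set L := Real.log (Real.log X) with hLdef
        have hLgt : L₀ < L := by
          calc L₀ = Real.log (Real.exp L₀) := (Real.log_exp _).symm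
          _ < L := Real.log_lt_log (Real.exp_pos _) hlogX
        have hL2 : 2 < L := lt_of_le_of_lt hL₀2 hLgt
        have hexpL : Real.exp (Real.exp L) = X := by
          rw [hLdef, Real.exp_log hlogXpos, Real.exp_log hXpos]
        have hL1 : (0:ℝ) < L - 1 := by linarith
        set σ := (c / (L - 1)) ^ 2 with hσdef
        have hbpos : 0 < c / (L - 1) := div_pos hc hL1
        have hσpos : 0 < σ := pow_pos hbpos 2
        have hsqrt : Real.sqrt σ = c / (L - 1) := Real.sqrt_sq hbpos.le
        have hsq0 : 0 < Real.sqrt σ₀ := Real.sqrt_pos.2 hσ₀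
        have hσlt : σ < σ₀ := by
          have h1 : c / Real.sqrt σ₀ < L - 1 := by linarith
          have h2 : c / (L - 1) < Real.sqrt σ₀ := by
            rw [div_lt_iff₀ hL1]
            rw [div_lt_iff₀ hsq0] at h1
            linarith
          calc σ = (c / (L - 1)) ^ 2 := rfl
          _ < Real.sqrt σ₀ ^ 2 := by
            have := pow_lt_pow_left₀ h2 hbpos.le (n := 2) (by norm_num)
            exact this
          _ = σ₀ := Real.sq_sqrt hσ₀.le
        have key := hyp σ ⟨hσpos, hσlt⟩
        rw [hsqrt] at key
        have hcd : c / (c / (L - 1)) = L - 1 := by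
          field_simp
        rw [hcd] at key
        have hNval : N = Real.exp (-(Real.exp (Real.exp L))) := by
          rw [hexpL, hXdef, neg_neg, Real.exp_log h0]
        have hterm : Real.exp (Real.exp (Real.exp (L - 1))) * N ≤ σ ^ μ := by
          have hσμ : σ ^ μ = Real.exp (2 * Real.log (c / (L - 1)) * μ) := by
            rw [Real.rpow_def_of_pos hσpos, hσdef, Real.log_pow]
            push_cast
            ring_nf
          rw [hNval, hσμ, ← Real.exp_add]
          apply Real.exp_le_exp.2
          have hlog : Real.log (c / (L - 1)) = -Real.log ((L - 1) / c) := by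
            rw [← Real.log_inv]
            congr 1
            field_simp
          rw [hlog]
          have h1 : Real.log ((L - 1) / c) ≤ (L - 1) / c :=
            Real.log_le_self (by positivity)
          have h2 : L * L ≤ Real.exp (Real.exp L) - Real.exp (Real.exp (L - 1)) := by
            have ha : L ≤ Real.exp (L - 1) := by
              have := Real.add_one_le_exp (L - 1); linarith
            have hb : Real.exp L = Real.exp 1 * Real.exp (L - 1) := by
              rw [← Real.exp_add]; ring_nf
            have he2 : (2:ℝ) ≤ Real.exp 1 := by
              linarith [Real.exp_one_gt_d9]
            have hc1 : 2 * Real.exp (L - 1) ≤ Real.exp L := by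
              rw [hb]
              have := mul_le_mul_of_nonneg_right he2 (Real.exp_pos (L - 1)).le
              linarith
            have hd : Real.exp (2 * Real.exp (L - 1)) ≤ Real.exp (Real.exp L) :=
              Real.exp_le_exp.2 hc1
            have he : Real.exp (2 * Real.exp (L - 1))
                = Real.exp (Real.exp (L - 1)) * Real.exp (Real.exp (L - 1)) := by
              rw [← Real.exp_add]; ring_nf
            have hf : L + 1 ≤ Real.exp (Real.exp (L - 1)) := by
              have := Real.add_one_le_exp (Real.exp (L - 1)); linarith
            have hg : L * L ≤ Real.exp (Real.exp (L - 1)) * (Real.exp (Real.exp (L - 1)) - 1) :=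
              mul_le_mul (by linarith) (by linarith) (by linarith) (by linarith)
            linarith [hd, he, hg]
          have h3 : 2 * μ ≤ L * c := by
            rw [div_le_iff₀ hc] at hL₀μ
            have := mul_le_mul_of_nonneg_right hLgt.le hc.le
            linarith
          have h4 : 2 * μ * Real.log ((L - 1) / c) ≤ L * L := by
            have h5 : 2 * μ * Real.log ((L - 1) / c) ≤ 2 * μ * ((L - 1) / c) :=
              mul_le_mul_of_nonneg_left h1 (by linarith)
            have h6 : 2 * μ * ((L - 1) / c) ≤ L * (L - 1) := by
              rw [← mul_div_assoc, div_le_iff₀ hc]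
              have := mul_le_mul_of_nonneg_right h3 hL1.le
              linarith
            have h7 : L * (L - 1) ≤ L * L := by
              have := mul_le_mul_of_nonneg_left (show L - 1 ≤ L by linarith)
                (show (0:ℝ) ≤ L by linarith)
              linarith
            linarith
          linarith
        have hCM2 : C * M ≤ 2 * σ ^ μ := by linarith
        have hσb : σ ^ μ ≤ (2 * c) ^ (2 * μ) * L ^ (-(μ / 2)) := by
          have h6 : c / (L - 1) ≤ 2 * c / L := by
            rw [div_le_div_iff₀ hL1 (by linarith)]
            have := mul_pos hc (show (0:ℝ) < L - 2 by linarith)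
            ring_nf
            try linarith
            try nlinarith
          have h7 : σ ≤ (2 * c / L) ^ 2 := pow_le_pow_left₀ hbpos.le h6 2
          have h8 : σ ^ μ ≤ ((2 * c / L) ^ 2) ^ μ := Real.rpow_le_rpow hσpos.le h7 hμ.le
          have hb2 : (0:ℝ) ≤ 2 * c / L := by positivity
          have h9 : (((2 * c / L) ^ 2 : ℝ)) ^ μ = (2 * c) ^ (2 * μ) / L ^ (2 * μ) := by
            rw [← Real.rpow_natCast (2 * c / L) 2, ← Real.rpow_mul hb2]
            push_cast
            rw [Real.div_rpow (by linarith) (by linarith)]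
          have h10 : L ^ (μ / 2) ≤ L ^ (2 * μ) :=
            Real.rpow_le_rpow_of_exponent_le (by linarith) (by linarith)
          have h11 : (0:ℝ) < L ^ (μ / 2) := Real.rpow_pos_of_pos (by linarith) _
          have h12 : (2 * c) ^ (2 * μ) / L ^ (2 * μ) ≤ (2 * c) ^ (2 * μ) / L ^ (μ / 2) := by
            gcongr
          have h13 : (2 * c) ^ (2 * μ) / L ^ (μ / 2) = (2 * c) ^ (2 * μ) * L ^ (-(μ / 2)) := by
            rw [Real.rpow_neg (by linarith), div_eq_mul_inv]
          calc σ ^ μ ≤ ((2 * c / L) ^ 2) ^ μ := h8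
          _ = (2 * c) ^ (2 * μ) / L ^ (2 * μ) := h9
          _ ≤ (2 * c) ^ (2 * μ) / L ^ (μ / 2) := h12
          _ = (2 * c) ^ (2 * μ) * L ^ (-(μ / 2)) := h13
        have hgoalbase : Real.log (Real.log |Real.log N|) = L := by rw [habs]
        rw [hgoalbase, div_mul_eq_mul_div, div_le_iff₀ (by positivity)]
        calc C * M ≤ 2 * σ ^ μ := hCM2
        _ ≤ 2 * ((2 * c) ^ (2 * μ) * L ^ (-(μ / 2))) := by linarith
        _ = L ^ (-(μ / 2)) * (2 * (2 * c) ^ (2 * μ)) := by ring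
    · intro hρN
      rw [le_div_iff₀ (Real.exp_pos _)]
      calc M * Real.exp (-Real.exp (Real.exp L₀))
          ≤ 1 * Real.exp (-Real.exp (Real.exp L₀)) :=
            mul_le_mul_of_nonneg_right hM1 (Real.exp_pos _).le
      _ = Real.exp (-Real.exp (Real.exp L₀)) := one_mul _
      _ ≤ N := hρN
end
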